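/- Let q > 1 and R > 0, and let (Ω_k) be a sequence of convex bodies in ℝⁿ, each containing the origin in its interior and contained in the ball B(0,R), whose radial functions satisfy ρ_{Ω_k}(ξ) → 0 as k → ∞ for almost every ξ ∈ S^{n−1} (with respect to spherical Lebesgue measure). Then the Gaussian chord integrals converge to zero: I_{γ,q}(Ω_k) → 0 as k → ∞. -/

import Mathlib

open MeasureTheory Filter
open scoped RealInnerProductSpace Topology

noncomputable section

/-- `n`-dimensional Euclidean space. -/
abbrev Eucl (n : ℕ) := EuclideanSpace ℝ (Fin n)

/-- The support function of `K`, as a `1`-homogeneous function on all of `ℝⁿ`;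
its restriction to the unit sphere is the usual support function `h_K`. -/
def suppFun {n : ℕ} (K : Set (Eucl n)) (x : Eucl n) : ℝ :=
  sSup ((fun y => ⟪x, y⟫) '' K)

/-- The radial function `ρ_K(ξ) = max {c > 0 : c • ξ ∈ K}`. -/
def radFun {n : ℕ} (K : Set (Eucl n)) (ξ : Eucl n) : ℝ :=
  sSup {c : ℝ | 0 < c ∧ c • ξ ∈ K}

/-- `Ṽ_{γ,q}(K, y) = 2 e^{-|y|²/2} ∫_K e^{-|z|²/2} |z - y|^{-(n-q+1)} dz`. -/
def Vtilde {n : ℕ} (q : ℝ) (K : Set (Eucl n)) (y : Eucl n) : ℝ :=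
  2 * Real.exp (-‖y‖ ^ 2 / 2) *
    ∫ z in K, Real.exp (-‖z‖ ^ 2 / 2) / ‖z - y‖ ^ ((n : ℝ) - q + 1)

/-- The Gaussian chord integral
`I_{γ,q}(K) = ∫_K ∫_K e^{-(|z|²+|y|²)/2} |z - y|^{-(n-q+1)} dz dy`. -/
def gaussChord {n : ℕ} (q : ℝ) (K : Set (Eucl n)) : ℝ :=
  ∫ y in K, ∫ z in K,
    Real.exp (-(‖z‖ ^ 2 + ‖y‖ ^ 2) / 2) / ‖z - y‖ ^ ((n : ℝ) - q + 1)

/-- The rank-one map `v ↦ ⟪x, v⟫ • x` (orthogonal projection onto `ℝ x` when `‖x‖ = 1`). -/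
def rankOne {n : ℕ} (x : Eucl n) : Eucl n →ₗ[ℝ] Eucl n where
  toFun v := ⟪x, v⟫ • x
  map_add' v w := by simp [inner_add_right, add_smul]
  map_smul' c v := by simp [inner_smul_right, mul_smul]

/-- For the `1`-homogeneous extension `H` of the support function `h` of a smooth strictly
convex body, `fderiv ℝ (gradient H) x` vanishes on `ℝ x` and restricts on the tangent space
`x^⊥` to the matrix of principal radii of curvature `∇²h + h I`.  Adding the rank-one
projection onto `ℝ x` therefore makes the determinant of the ambient map equal to
`det(∇²h + h I)`, the reciprocal Gauss curvature. -/
def curvDet {n : ℕ} (H : Eucl n → ℝ) (x : Eucl n) : ℝ :=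
  LinearMap.det
    ((fderiv ℝ (fun y => gradient H y) x : Eucl n →ₗ[ℝ] Eucl n) + rankOne x)

/-- A convex body in `ℝⁿ` which is origin-symmetric and has smooth, strictly convex
boundary (encoded via smoothness of its support function away from the origin and
positivity of the curvature determinant on the sphere). -/
def IsSmoothBody {n : ℕ} (Ω : Set (Eucl n)) : Prop :=
  IsCompact Ω ∧ Convex ℝ Ω ∧ (0 : Eucl n) ∈ interior Ω ∧ (∀ x ∈ Ω, -x ∈ Ω) ∧
    ContDiffOn ℝ (⊤ : ℕ∞) (suppFun Ω) {(0 : Eucl n)}ᶜ ∧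
    ∀ x ∈ Metric.sphere (0 : Eucl n) 1, 0 < curvDet (suppFun Ω) x

/-- The normalizing factor
`θ(t) = (∫_{S^{n-1}} Ṽ_{γ,q}(Ω, ρ(ξ)ξ) ρ(ξ)ⁿ dξ) / (∫_{S^{n-1}} h(x)^p f(x) dx)`. -/
def theta {n : ℕ} (q p : ℝ) (f : Eucl n → ℝ) (K : Set (Eucl n)) : ℝ :=
  (∫ ξ in Metric.sphere (0 : Eucl n) 1,
      Vtilde q K (radFun K ξ • ξ) * radFun K ξ ^ n ∂μH[(n : ℝ) - 1]) /
  ∫ x in Metric.sphere (0 : Eucl n) 1, suppFun K x ^ p * f x ∂μH[(n : ℝ) - 1]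

/-- The right-hand side `-θ h^p 𝒦 f / Ṽ_{γ,q}(K, ∇h + h x) + h` of the normalized Gauss
curvature flow, expressed through the `1`-homogeneous extension of the support function
(`gradient (suppFun K) x = ∇h(x) + h(x) x` and `𝒦 = (curvDet (suppFun K) x)⁻¹`). -/
def flowRHS {n : ℕ} (q p : ℝ) (f : Eucl n → ℝ) (K : Set (Eucl n)) (x : Eucl n) : ℝ :=
  -(theta q p f K) * suppFun K x ^ p * (curvDet (suppFun K) x)⁻¹ * f x /
      Vtilde q K (gradient (suppFun K) x) + suppFun K x

/-- `K : ℝ → Set (Eucl n)` solves the normalized Gauss curvature flow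
`∂h/∂t = -θ(t) h^p 𝒦 f / Ṽ_{γ,q} + h` on the time set `S`. -/
def IsGaussChordFlow {n : ℕ} (q p : ℝ) (f : Eucl n → ℝ) (S : Set ℝ)
    (K : ℝ → Set (Eucl n)) : Prop :=
  ∀ t ∈ S, ∀ x ∈ Metric.sphere (0 : Eucl n) 1,
    HasDerivWithinAt (fun s => suppFun (K s) x) (flowRHS q p f (K t) x) S t

/-- The Wulff shape (Aleksandrov body) of a function `φ` on the unit sphere. -/
def wulff {n : ℕ} (φ : Eucl n → ℝ) : Set (Eucl n) :=
  {x | ∀ u ∈ Metric.sphere (0 : Eucl n) 1, ⟪x, u⟫ ≤ φ u}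

/-- `ν` is a Gauss map of `∂K`: at every boundary point `y` of `K`, `ν y` is an outer
unit normal, i.e. `y · ν y = h_K(ν y)`. -/
def IsGaussMap {n : ℕ} (K : Set (Eucl n)) (ν : Eucl n → Eucl n) : Prop :=
  ∀ y ∈ frontier K, ν y ∈ Metric.sphere (0 : Eucl n) 1 ∧ ⟪y, ν y⟫ = suppFun K (ν y)


open Metric Set
open scoped ENNReal NNReal

lemma kernelIntegrable {n : ℕ} {p : ℝ} (hp : -(n : ℝ) < p) (y : Eucl n) {r : ℝ} (hr : 0 < r) :
    IntegrableOn (fun z : Eucl n => ‖z - y‖ ^ p) (closedBall y r) := by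
  have hmeas : Measurable (fun z : Eucl n => ‖z - y‖ ^ p) :=
    ((measurable_id.sub_const y).norm).pow_const p
  rcases le_or_gt 0 p with hp0 | hp0
  · -- bounded case
    refine Measure.integrableOn_of_bounded (M := (max 1 r) ^ p) (measure_closedBall_lt_top.ne)
      hmeas.aestronglyMeasurable ?_
    filter_upwards [ae_restrict_mem measurableSet_closedBall] with z hz
    rw [Real.norm_eq_abs, abs_of_nonneg (Real.rpow_nonneg (norm_nonneg _) _)]
    calc ‖z - y‖ ^ p ≤ (max 1 r) ^ p := by
          apply Real.rpow_le_rpow (norm_nonneg _) _ hp0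
          calc ‖z - y‖ ≤ r := by simpa [dist_eq_norm] using hz
            _ ≤ max 1 r := le_max_right _ _
      _ ≤ max 1 r ^ p := le_rfl
  · -- singular case `p < 0`: layer cake
    have hpne : p ≠ 0 := hp0.ne
    have hn0 : 0 < (n : ℝ) := lt_of_le_of_lt (by positivity) (neg_lt_zero.mp (hp.trans hp0))
    set μ := volume.restrict (closedBall y r) with hμ
    haveI : IsFiniteMeasure μ := ⟨by simpa [hμ] using measure_closedBall_lt_top⟩
    have hnn : 0 ≤ᵐ[μ] fun z : Eucl n => ‖z - y‖ ^ p :=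
      Eventually.of_forall fun z => Real.rpow_nonneg (norm_nonneg _) _
    constructor
    · exact hmeas.aestronglyMeasurable
    · rw [HasFiniteIntegral, ← hμ]
      have hofr : (∫⁻ z, ‖(‖z - y‖ ^ p : ℝ)‖ₑ ∂μ) = ∫⁻ z, ENNReal.ofReal (‖z - y‖ ^ p) ∂μ :=
        lintegral_enorm_of_nonneg fun z => Real.rpow_nonneg (norm_nonneg _) _
      rw [hofr, lintegral_eq_lintegral_meas_le μ hnn hmeas.aemeasurable]
      have hsetle : ∀ t : ℝ, 0 < t →
          μ {a | t ≤ ‖a - y‖ ^ p} ≤ volume (closedBall y (t ^ p⁻¹)) := by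
        intro t ht
        refine le_trans (le_trans (Measure.restrict_le_self _) (measure_mono ?_)) le_rfl
        intro a ha
        simp only [mem_setOf_eq] at ha
        have hay : a ≠ y := by
          rintro rfl
          rw [sub_self, norm_zero, Real.zero_rpow hpne] at ha
          exact absurd (lt_of_lt_of_le ht ha) (lt_irrefl 0)
        have hna : 0 < ‖a - y‖ := by
          rw [norm_pos_iff]; exact sub_ne_zero_of_ne hay
        have : ‖a - y‖ ≤ t ^ p⁻¹ := (Real.le_rpow_inv_iff_of_neg hna ht hp0).mpr ha
        simpa [dist_eq_norm] using this
      calc (∫⁻ t in Ioi (0:ℝ), μ {a | t ≤ ‖a - y‖ ^ p})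
          ≤ ∫⁻ t in Ioc (0:ℝ) 1 ∪ Ioi 1, μ {a | t ≤ ‖a - y‖ ^ p} :=
            lintegral_mono_set Ioi_subset_Ioc_union_Ioi
        _ ≤ (∫⁻ t in Ioc (0:ℝ) 1, μ {a | t ≤ ‖a - y‖ ^ p})
              + ∫⁻ t in Ioi (1:ℝ), μ {a | t ≤ ‖a - y‖ ^ p} := lintegral_union_le _ _ _
        _ < ∞ := by
            refine ENNReal.add_lt_top.2 ⟨?_, ?_⟩
            · calc (∫⁻ t in Ioc (0:ℝ) 1, μ {a | t ≤ ‖a - y‖ ^ p})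
                  ≤ ∫⁻ _ in Ioc (0:ℝ) 1, μ univ := by
                    refine lintegral_mono fun t => measure_mono (subset_univ _)
                _ = μ univ * volume (Ioc (0:ℝ) 1) := by
                    rw [setLIntegral_const]
                _ < ∞ := by
                    refine ENNReal.mul_lt_top (measure_lt_top _ _) (by simp)
            · have hexp : (n : ℝ) * p⁻¹ < -1 := by
                rw [mul_comm, ← div_eq_inv_mul, div_lt_iff_of_neg hp0]
                linarith
              calc (∫⁻ t in Ioi (1:ℝ), μ {a | t ≤ ‖a - y‖ ^ p})
                  ≤ ∫⁻ t in Ioi (1:ℝ),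
                      ENNReal.ofReal (t ^ ((n:ℝ) * p⁻¹)) * volume (closedBall (0 : Eucl n) 1) := by
                    refine setLIntegral_mono' measurableSet_Ioi fun t ht => ?_
                    have ht1 : (1:ℝ) < t := ht
                    have ht0 : (0:ℝ) < t := zero_lt_one.trans ht1
                    refine (hsetle t ht0).trans ?_
                    rw [Measure.addHaar_closedBall _ _ (Real.rpow_nonneg ht0.le _)]
                    rw [← Real.rpow_natCast (t ^ p⁻¹) , ← Real.rpow_mul ht0.le,
                      finrank_euclideanSpace_fin, mul_comm p⁻¹]
                    exact mul_le_mul_right (measure_mono ball_subset_closedBall) _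
                _ = (∫⁻ t in Ioi (1:ℝ), ENNReal.ofReal (t ^ ((n:ℝ) * p⁻¹)))
                      * volume (closedBall (0 : Eucl n) 1) := lintegral_mul_const' _ _
                        (measure_closedBall_lt_top.ne)
                _ < ∞ := by
                    refine ENNReal.mul_lt_top ?_ measure_closedBall_lt_top
                    exact (integrableOn_Ioi_rpow_of_lt hexp zero_lt_one).setLIntegral_lt_top


lemma piece_bound {n : ℕ} (hn : 1 ≤ n) {R' δ : ℝ} (hR' : 0 < R') (hδ0 : 0 < δ) (hδ1 : δ ≤ 1)
    {A : Set (Eucl n)} (hA : A ⊆ sphere (0 : Eucl n) 1) {ξ₀ : Eucl n} (hξ₀ : ξ₀ ∈ A)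
    (hdiam : ∀ ξ ∈ A, dist ξ ξ₀ ≤ δ) :
    volume {x : Eucl n | ∃ c ξ, c ∈ Set.Ioc (0:ℝ) R' ∧ ξ ∈ A ∧ x = c • ξ}
      ≤ ENNReal.ofReal ((R' + 1) ^ (n + 1) * δ ^ (n - 1)) *
          volume (closedBall (0 : Eucl n) 1) := by
  set K := ⌊R' / δ⌋₊ with hK
  have hsub : {x : Eucl n | ∃ c ξ, c ∈ Set.Ioc (0:ℝ) R' ∧ ξ ∈ A ∧ x = c • ξ} ⊆
      ⋃ k ∈ Finset.range (K + 1), closedBall (((k : ℝ) * δ) • ξ₀) ((R' + 1) * δ) := by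
    rintro x ⟨c, ξ, ⟨hc0, hcR⟩, hξA, rfl⟩
    have hξ1 : ‖ξ‖ = 1 := by simpa using hA hξA
    set k := ⌊c / δ⌋₊ with hk
    have hkK : k ≤ K := Nat.floor_mono (by gcongr)
    have hkd : (k : ℝ) * δ ≤ c := by
      rw [← le_div_iff₀ hδ0]
      exact Nat.floor_le (by positivity)
    have hckd : c - (k : ℝ) * δ ≤ δ := by
      have := Nat.lt_floor_add_one (c / δ)
      have : c / δ < (k : ℝ) + 1 := by exact_mod_cast this
      nlinarith [(div_lt_iff₀ hδ0).mp this]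
    refine mem_iUnion₂.2 ⟨k, Finset.mem_range.2 (Nat.lt_succ_of_le hkK), ?_⟩
    rw [mem_closedBall, dist_eq_norm]
    calc ‖c • ξ - ((k : ℝ) * δ) • ξ₀‖
        ≤ ‖c • ξ - ((k : ℝ) * δ) • ξ‖ + ‖((k : ℝ) * δ) • ξ - ((k : ℝ) * δ) • ξ₀‖ := by
          exact norm_sub_le_norm_sub_add_norm_sub _ _ _
      _ = |c - (k : ℝ) * δ| * ‖ξ‖ + |(k : ℝ) * δ| * ‖ξ - ξ₀‖ := by
          rw [← sub_smul, ← smul_sub, norm_smul, norm_smul, Real.norm_eq_abs, Real.norm_eq_abs]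
      _ ≤ δ * 1 + R' * δ := by
          have h1 : |c - (k : ℝ) * δ| ≤ δ := abs_le.2 ⟨by nlinarith, hckd⟩
          have h2 : |(k : ℝ) * δ| ≤ R' := by
            rw [abs_of_nonneg (by positivity)]; linarith
          have h3 : ‖ξ - ξ₀‖ ≤ δ := by
            rw [← dist_eq_norm]; exact hdiam ξ hξA
          have h4 : (0:ℝ) ≤ ‖ξ - ξ₀‖ := norm_nonneg _
          rw [hξ1]
          nlinarith
      _ = (R' + 1) * δ := by ring
  calc volume {x : Eucl n | ∃ c ξ, c ∈ Set.Ioc (0:ℝ) R' ∧ ξ ∈ A ∧ x = c • ξ}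
      ≤ volume (⋃ k ∈ Finset.range (K + 1), closedBall (((k : ℝ) * δ) • ξ₀) ((R' + 1) * δ)) :=
        measure_mono hsub
    _ ≤ ∑ k ∈ Finset.range (K + 1), volume (closedBall (((k : ℝ) * δ) • ξ₀) ((R' + 1) * δ)) :=
        measure_biUnion_finset_le _ _
    _ = (K + 1 : ℕ) * (ENNReal.ofReal (((R' + 1) * δ) ^ n) * volume (ball (0 : Eucl n) 1)) := by
        simp only [Measure.addHaar_closedBall _ _ (show (0:ℝ) ≤ (R'+1)*δ by positivity),
          finrank_euclideanSpace_fin, Finset.sum_const, Finset.card_range, nsmul_eq_mul]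
    _ ≤ ENNReal.ofReal ((R' + 1) ^ (n + 1) * δ ^ (n - 1)) * volume (closedBall (0 : Eucl n) 1) := by
        obtain ⟨m, rfl⟩ : ∃ m, n = m + 1 := ⟨n - 1, (Nat.succ_pred_eq_of_pos hn).symm⟩
        have hKle : (K : ℝ) * δ ≤ R' := by
          rw [← le_div_iff₀ hδ0]; exact Nat.floor_le (by positivity)
        rw [← mul_assoc]
        refine mul_le_mul' ?_ (measure_mono ball_subset_closedBall)
        rw [← ENNReal.ofReal_natCast, ← ENNReal.ofReal_mul (by positivity)]
        refine ENNReal.ofReal_le_ofReal ?_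
        have h1 : ((K + 1 : ℕ) : ℝ) * δ ≤ R' + 1 := by push_cast; nlinarith
        have h2 : (0:ℝ) ≤ (R' + 1) ^ (m + 1) * δ ^ m := by positivity
        calc ((K + 1 : ℕ) : ℝ) * ((R' + 1) * δ) ^ (m + 1)
            = (((K + 1 : ℕ) : ℝ) * δ) * ((R' + 1) ^ (m + 1) * δ ^ m) := by
              rw [mul_pow]; ring
          _ ≤ (R' + 1) * ((R' + 1) ^ (m + 1) * δ ^ m) := mul_le_mul_of_nonneg_right h1 h2
          _ = (R' + 1) ^ (m + 1 + 1) * δ ^ (m + 1 - 1) := by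
              simp only [Nat.add_sub_cancel]; ring


lemma cone_null {n : ℕ} (hn : 2 ≤ n) {N : Set (Eucl n)} (hN : N ⊆ sphere (0 : Eucl n) 1)
    (h0 : μH[(n : ℝ) - 1] N = 0) {R' : ℝ} (hR' : 0 < R') :
    volume {x : Eucl n | ∃ c ξ, c ∈ Set.Ioc (0:ℝ) R' ∧ ξ ∈ N ∧ x = c • ξ} = 0 := by
  have hn1 : 1 ≤ n := le_trans one_le_two hn
  have hd0 : (0:ℝ) < (n : ℝ) - 1 := by
    have : (2:ℝ) ≤ n := by exact_mod_cast hn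
    linarith
  set B := volume (closedBall (0 : Eucl n) 1) with hB
  set CR : ℝ≥0∞ := ENNReal.ofReal ((R' + 1) ^ (n + 1)) * B with hCR
  have hCR0 : CR ≠ 0 := by
    refine mul_ne_zero ?_ ?_
    · simp only [ne_eq, ENNReal.ofReal_eq_zero, not_le]; positivity
    · exact (measure_closedBall_pos volume _ zero_lt_one).ne'
  have hCRtop : CR ≠ ∞ := ENNReal.mul_ne_top ENNReal.ofReal_ne_top measure_closedBall_lt_top.ne
  rw [← nonpos_iff_eq_zero]
  refine ENNReal.le_of_forall_pos_le_add fun ε hε _ => ?_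
  -- extract a good cover
  set ε₀ : ℝ≥0∞ := (ε : ℝ≥0∞) / CR with hε₀
  have hε₀pos : 0 < ε₀ := ENNReal.div_pos (by exact_mod_cast hε.ne') hCRtop
  have hinf : (⨅ (t : ℕ → Set (Eucl n)) (_ : N ⊆ ⋃ i, t i) (_ : ∀ i, EMetric.diam (t i) ≤ 1),
      ∑' i, ⨆ _ : (t i).Nonempty, EMetric.diam (t i) ^ ((n : ℝ) - 1)) < ε₀ := by
    refine lt_of_le_of_lt (le_trans ?_ h0.le) hε₀pos
    rw [Measure.hausdorffMeasure_apply]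
    exact le_iSup₂_of_le 1 one_pos le_rfl
  rw [iInf_lt_iff] at hinf
  obtain ⟨t, hinf⟩ := hinf
  rw [iInf_lt_iff] at hinf
  obtain ⟨hcover, hinf⟩ := hinf
  rw [iInf_lt_iff] at hinf
  obtain ⟨hdiam1, hsum⟩ := hinf
  -- the cone over `N` is covered by the cones over `t i ∩ sphere`
  have hconesub : {x : Eucl n | ∃ c ξ, c ∈ Set.Ioc (0:ℝ) R' ∧ ξ ∈ N ∧ x = c • ξ} ⊆
      ⋃ i, {x : Eucl n | ∃ c ξ, c ∈ Set.Ioc (0:ℝ) R' ∧ ξ ∈ t i ∩ sphere (0 : Eucl n) 1 ∧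
        x = c • ξ} := by
    rintro x ⟨c, ξ, hc, hξ, rfl⟩
    obtain ⟨i, hi⟩ := mem_iUnion.mp (hcover hξ)
    exact mem_iUnion.2 ⟨i, c, ξ, hc, ⟨hi, hN hξ⟩, rfl⟩
  have hpiece : ∀ i, volume {x : Eucl n | ∃ c ξ, c ∈ Set.Ioc (0:ℝ) R' ∧
      ξ ∈ t i ∩ sphere (0 : Eucl n) 1 ∧ x = c • ξ} ≤
      CR * ⨆ _ : (t i).Nonempty, EMetric.diam (t i) ^ ((n : ℝ) - 1) := by
    intro i
    rcases (t i ∩ sphere (0 : Eucl n) 1).eq_empty_or_nonempty with hemp | ⟨ξ₀, hξ₀⟩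
    · have : {x : Eucl n | ∃ c ξ, c ∈ Set.Ioc (0:ℝ) R' ∧
          ξ ∈ t i ∩ sphere (0 : Eucl n) 1 ∧ x = c • ξ} = ∅ := by
        ext x; simp only [mem_setOf_eq, mem_empty_iff_false, iff_false]
        rintro ⟨c, ξ, -, hξ, -⟩
        exact absurd (hemp ▸ hξ) (notMem_empty ξ)
      rw [this, measure_empty]; exact zero_le
    · have hne : (t i).Nonempty := ⟨ξ₀, hξ₀.1⟩
      rw [iSup_pos hne]
      rcases eq_or_ne (EMetric.diam (t i)) 0 with hdi | hdi
      · -- degenerate piece: contained in a line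
        rw [hdi, ENNReal.zero_rpow_of_pos hd0, mul_zero, nonpos_iff_eq_zero]
        have hξ₀0 : ξ₀ ≠ 0 := by
          have : ‖ξ₀‖ = 1 := by simpa using hξ₀.2
          intro h; rw [h, norm_zero] at this; norm_num at this
        have hsub : {x : Eucl n | ∃ c ξ, c ∈ Set.Ioc (0:ℝ) R' ∧
            ξ ∈ t i ∩ sphere (0 : Eucl n) 1 ∧ x = c • ξ} ⊆
            (Submodule.span ℝ {ξ₀} : Submodule ℝ (Eucl n)) := by
          rintro x ⟨c, ξ, -, hξ, rfl⟩
          have : ξ = ξ₀ := by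
            have h1 : edist ξ ξ₀ ≤ EMetric.diam (t i) :=
              EMetric.edist_le_diam_of_mem hξ.1 hξ₀.1
            rw [hdi, le_zero_iff, edist_eq_zero] at h1
            exact h1
          rw [this]
          exact Submodule.mem_span_singleton.2 ⟨c, rfl⟩
        refine measure_mono_null hsub (Measure.addHaar_submodule _ _ ?_)
        intro htop
        have h1 : Module.finrank ℝ (Submodule.span ℝ ({ξ₀} : Set (Eucl n))) = 1 :=
          finrank_span_singleton hξ₀0
        rw [htop, finrank_top, finrank_euclideanSpace_fin] at h1
        omega
      · -- nondegenerate piece: use `piece_bound`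
        have hdfin : EMetric.diam (t i) ≠ ∞ := by
          exact ne_top_of_le_ne_top ENNReal.one_ne_top (hdiam1 i)
        set δ := (EMetric.diam (t i)).toReal with hδ
        have hδ0 : 0 < δ := ENNReal.toReal_pos hdi hdfin
        have hδ1 : δ ≤ 1 := by
          rw [hδ, ← ENNReal.toReal_one]
          exact ENNReal.toReal_mono ENNReal.one_ne_top (hdiam1 i)
        have hbd := piece_bound hn1 hR' hδ0 hδ1 (inter_subset_right
          (s := t i) (t := sphere (0 : Eucl n) 1)) hξ₀
          (fun ξ hξ => by
            have : edist ξ ξ₀ ≤ EMetric.diam (t i) := EMetric.edist_le_diam_of_mem hξ.1 hξ₀.1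
            rw [← ENNReal.toReal_le_toReal (edist_ne_top _ _) hdfin] at this
            simpa [dist_edist] using this)
        refine hbd.trans ?_
        have heq : ENNReal.ofReal ((R' + 1) ^ (n + 1) * δ ^ (n - 1)) =
            ENNReal.ofReal ((R' + 1) ^ (n + 1)) * EMetric.diam (t i) ^ ((n : ℝ) - 1) := by
          rw [ENNReal.ofReal_mul (by positivity), ENNReal.ofReal_pow hδ0.le,
            ENNReal.ofReal_toReal hdfin]
          congr 1
          rw [← ENNReal.rpow_natCast]
          congr 1
          rw [Nat.cast_sub hn1, Nat.cast_one]
        rw [heq, hCR]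
        ring_nf
        exact le_rfl
  calc volume {x : Eucl n | ∃ c ξ, c ∈ Set.Ioc (0:ℝ) R' ∧ ξ ∈ N ∧ x = c • ξ}
      ≤ ∑' i, volume {x : Eucl n | ∃ c ξ, c ∈ Set.Ioc (0:ℝ) R' ∧
          ξ ∈ t i ∩ sphere (0 : Eucl n) 1 ∧ x = c • ξ} :=
        le_trans (measure_mono hconesub) (measure_iUnion_le _)
    _ ≤ ∑' i, CR * ⨆ _ : (t i).Nonempty, EMetric.diam (t i) ^ ((n : ℝ) - 1) :=
        ENNReal.tsum_le_tsum hpiece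
    _ = CR * ∑' i, ⨆ _ : (t i).Nonempty, EMetric.diam (t i) ^ ((n : ℝ) - 1) :=
        ENNReal.tsum_mul_left
    _ ≤ CR * ε₀ := mul_le_mul_right hsum.le _
    _ ≤ 0 + (ε : ℝ≥0∞) := by rw [zero_add]; exact ENNReal.mul_div_le


/-- (Continuity-to-zero of the Gaussian chord integral: if uniformly
bounded convex bodies `Ω_k` containing the origin in their interiors have radial
functions tending to `0` almost everywhere on the sphere, then `I_{γ,q}(Ω_k) → 0`). -/
theorem gaussChord_tendsto_zero_of_radial_tendsto_zero
    (n : ℕ) (q R : ℝ) (hq : 1 < q) (hR : 0 < R)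
    (Ω : ℕ → Set (Eucl n))
    (hcomp : ∀ k, IsCompact (Ω k)) (hconv : ∀ k, Convex ℝ (Ω k))
    (h0 : ∀ k, (0 : Eucl n) ∈ interior (Ω k))
    (hsub : ∀ k, Ω k ⊆ Metric.closedBall (0 : Eucl n) R)
    (hrad : ∀ᵐ ξ ∂(μH[(n : ℝ) - 1]).restrict (Metric.sphere (0 : Eucl n) 1),
      Tendsto (fun k => radFun (Ω k) ξ) atTop (nhds 0)) :
    Tendsto (fun k => gaussChord q (Ω k)) atTop (nhds 0) := by
  rcases Nat.eq_zero_or_pos n with rfl | hn1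
  · -- trivial case `n = 0`
    have hz : ∀ K : Set (Eucl 0), gaussChord q K = 0 := by
      intro K
      haveI : Subsingleton (Eucl 0) := ⟨fun a b => PiLp.ext fun i => i.elim0⟩
      have hint : ∀ z y : Eucl 0,
          Real.exp (-(‖z‖ ^ 2 + ‖y‖ ^ 2) / 2) / ‖z - y‖ ^ (((0:ℕ) : ℝ) - q + 1) = 0 := by
        intro z y
        have hzy : z - y = 0 := Subsingleton.elim _ _
        rw [hzy, norm_zero, Real.zero_rpow (by push_cast; intro h; linarith), div_zero]
      simp only [gaussChord, hint, integral_zero]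
    simpa [hz] using tendsto_const_nhds (x := (0:ℝ)) (f := atTop (α := ℕ))
  have hn1' : (1:ℝ) ≤ (n:ℝ) := by exact_mod_cast hn1
  haveI : Nontrivial (Eucl n) := Module.nontrivial_of_finrank_pos
    (R := ℝ) (by rw [finrank_euclideanSpace_fin]; omega)
  set p : ℝ := q - (n : ℝ) - 1 with hp_def
  have hp : -(n : ℝ) < p := by rw [hp_def]; linarith
  set C₀ : ℝ := ∫ w in closedBall (0 : Eucl n) (2 * R), ‖w‖ ^ p with hC₀
  -- Step 1: uniform bound `‖gaussChord q (Ω k)‖ ≤ C₀ * vol(Ω k)`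
  have hbound : ∀ k, ‖gaussChord q (Ω k)‖ ≤ C₀ * (volume (Ω k)).toReal := by
    intro k
    have hmeasΩ : MeasurableSet (Ω k) := (hcomp k).isClosed.measurableSet
    have hvolΩ : volume (Ω k) < ∞ :=
      lt_of_le_of_lt (measure_mono (hsub k)) measure_closedBall_lt_top
    refine norm_setIntegral_le_of_norm_le_const hvolΩ ?_
    intro y hy
    have hyR : ‖y‖ ≤ R := by simpa [mem_closedBall, dist_eq_norm] using hsub k hy
    have hΩy : Ω k ⊆ closedBall y (2 * R) := by
      intro z hz
      have hzR : ‖z‖ ≤ R := by simpa [mem_closedBall, dist_eq_norm] using hsub k hz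
      have : dist z y ≤ ‖z‖ + ‖y‖ := by
        rw [dist_eq_norm]; exact norm_sub_le _ _
      rw [mem_closedBall]; linarith
    have hker : IntegrableOn (fun z : Eucl n => ‖z - y‖ ^ p) (closedBall y (2 * R)) :=
      kernelIntegrable hp y (by linarith)
    have hkerΩ : IntegrableOn (fun z : Eucl n => ‖z - y‖ ^ p) (Ω k) := hker.mono_set hΩy
    have hm : Measurable (fun z : Eucl n =>
        Real.exp (-(‖z‖ ^ 2 + ‖y‖ ^ 2) / 2) / ‖z - y‖ ^ ((n : ℝ) - q + 1)) := by
      refine Measurable.div ?_ (((measurable_id.sub_const y).norm).pow_const _)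
      exact (Real.continuous_exp.comp (by fun_prop)).measurable
    have hfb : ∀ z : Eucl n,
        ‖Real.exp (-(‖z‖ ^ 2 + ‖y‖ ^ 2) / 2) / ‖z - y‖ ^ ((n : ℝ) - q + 1)‖ ≤ ‖z - y‖ ^ p := by
      intro z
      have hrw : ‖z - y‖ ^ p = (‖z - y‖ ^ ((n : ℝ) - q + 1))⁻¹ := by
        rw [← Real.rpow_neg (norm_nonneg _)]
        congr 1
        rw [hp_def]; ring
      rw [Real.norm_eq_abs, abs_of_nonneg (by positivity), hrw, div_eq_mul_inv]
      have h1 : Real.exp (-(‖z‖ ^ 2 + ‖y‖ ^ 2) / 2) ≤ 1 := by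
        rw [Real.exp_le_one_iff]
        have : (0:ℝ) ≤ ‖z‖ ^ 2 + ‖y‖ ^ 2 := by positivity
        linarith
      calc Real.exp (-(‖z‖ ^ 2 + ‖y‖ ^ 2) / 2) * (‖z - y‖ ^ ((n : ℝ) - q + 1))⁻¹
          ≤ 1 * (‖z - y‖ ^ ((n : ℝ) - q + 1))⁻¹ :=
            mul_le_mul_of_nonneg_right h1 (by positivity)
        _ = (‖z - y‖ ^ ((n : ℝ) - q + 1))⁻¹ := one_mul _
    have hintf : IntegrableOn (fun z : Eucl n =>
        Real.exp (-(‖z‖ ^ 2 + ‖y‖ ^ 2) / 2) / ‖z - y‖ ^ ((n : ℝ) - q + 1)) (Ω k) := by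
      refine Integrable.mono hkerΩ hm.aestronglyMeasurable ?_
      refine Eventually.of_forall fun z => ?_
      refine (hfb z).trans ?_
      rw [Real.norm_eq_abs, abs_of_nonneg (Real.rpow_nonneg (norm_nonneg _) _)]
    calc ‖∫ z in Ω k, Real.exp (-(‖z‖ ^ 2 + ‖y‖ ^ 2) / 2) / ‖z - y‖ ^ ((n : ℝ) - q + 1)‖
        ≤ ∫ z in Ω k, ‖Real.exp (-(‖z‖ ^ 2 + ‖y‖ ^ 2) / 2) / ‖z - y‖ ^ ((n : ℝ) - q + 1)‖ :=
          norm_integral_le_integral_norm _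
      _ ≤ ∫ z in Ω k, ‖z - y‖ ^ p := integral_mono hintf.norm hkerΩ hfb
      _ ≤ ∫ z in closedBall y (2 * R), ‖z - y‖ ^ p := by
          refine setIntegral_mono_set hker ?_ (HasSubset.Subset.eventuallyLE hΩy)
          exact Eventually.of_forall fun z => Real.rpow_nonneg (norm_nonneg _) _
      _ = C₀ := by
          rw [hC₀]
          calc ∫ z in closedBall y (2 * R), ‖z - y‖ ^ p
              = ∫ z, (closedBall y (2 * R)).indicator (fun z => ‖z - y‖ ^ p) z :=
                (integral_indicator measurableSet_closedBall).symm
            _ = ∫ z, (closedBall (0 : Eucl n) (2 * R)).indicator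
                  (fun w => ‖w‖ ^ p) (z - y) := by
                congr 1
                funext z
                by_cases hz : z ∈ closedBall y (2 * R)
                · rw [Set.indicator_of_mem hz, Set.indicator_of_mem
                    (by simpa [mem_closedBall, dist_eq_norm] using hz)]
                · rw [Set.indicator_of_notMem hz, Set.indicator_of_notMem
                    (fun h => hz (by simpa [mem_closedBall, dist_eq_norm] using h))]
            _ = ∫ w, (closedBall (0 : Eucl n) (2 * R)).indicator (fun w => ‖w‖ ^ p) w :=
                integral_sub_right_eq_self _ y
            _ = ∫ w in closedBall (0 : Eucl n) (2 * R), ‖w‖ ^ p :=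
                integral_indicator measurableSet_closedBall
  -- Step 2: volumes tend to zero
  have hvol : Tendsto (fun k => volume (Ω k)) atTop (𝓝 0) := by
    set T : Set (Eucl n) := {ξ | ¬ Tendsto (fun k => radFun (Ω k) ξ) atTop (𝓝 0)} with hT
    set N : Set (Eucl n) := T ∩ sphere (0 : Eucl n) 1 with hN
    have hNnull : μH[(n : ℝ) - 1] N = 0 := by
      have := ae_iff.mp hrad
      rwa [Measure.restrict_apply' isClosed_sphere.measurableSet] at this
    have hNsub : N ⊆ sphere (0 : Eucl n) 1 := inter_subset_right
    set Bad : Set (Eucl n) := {x | x ≠ 0 ∧ (‖x‖⁻¹ • x) ∈ N} with hBadDef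
    have hBad : volume Bad = 0 := by
      rcases lt_or_ge n 2 with hn2 | hn2
      · -- `n = 1`: the bad set on the sphere is empty
        have hn1'' : n = 1 := by omega
        subst hn1''
        have : N = ∅ := by
          by_contra hne
          have h1 : 1 ≤ μH[((1:ℕ) : ℝ) - 1] N := by
            have : (((1:ℕ) : ℝ) - 1) = 0 := by norm_num
            rw [this]
            exact Measure.one_le_hausdorffMeasure_zero_of_nonempty (nonempty_iff_ne_empty.2 hne)
          rw [hNnull] at h1
          exact absurd h1 (by simp)
        have : Bad = ∅ := by
          ext x; simp only [hBadDef, mem_setOf_eq, mem_empty_iff_false, iff_false, not_and]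
          intro _; rw [this]; exact notMem_empty _
        rw [this, measure_empty]
      · -- `n ≥ 2`: cone over the null set `N` is null
        have hcone : ∀ m : ℕ, volume {x : Eucl n | ∃ c ξ,
            c ∈ Set.Ioc (0:ℝ) ((m:ℝ) + 1) ∧ ξ ∈ N ∧ x = c • ξ} = 0 :=
          fun m => cone_null hn2 hNsub hNnull (by positivity)
        refine measure_mono_null ?_ (measure_iUnion_null fun m : ℕ => hcone m)
        rintro x ⟨hx0, hxN⟩
        have hnx : 0 < ‖x‖ := norm_pos_iff.2 hx0
        refine mem_iUnion.2 ⟨⌊‖x‖⌋₊, ‖x‖, ‖x‖⁻¹ • x, ⟨hnx, (Nat.lt_floor_add_one ‖x‖).le⟩,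
          hxN, ?_⟩
        rw [smul_smul, mul_inv_cancel₀ hnx.ne', one_smul]
    have hpt : ∀ x : Eucl n, x ∉ Bad ∪ {0} →
        Tendsto (fun k => (Ω k).indicator (1 : Eucl n → ℝ≥0∞) x) atTop
          (𝓝 ((fun _ => (0:ℝ≥0∞)) x)) := by
      intro x hx
      simp only [mem_union, mem_singleton_iff, not_or] at hx
      obtain ⟨hxBad, hx0⟩ := hx
      have hnx : 0 < ‖x‖ := norm_pos_iff.2 hx0
      set ξ : Eucl n := ‖x‖⁻¹ • x with hξdef
      have hξS : ξ ∈ sphere (0 : Eucl n) 1 := by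
        simp only [mem_sphere_iff_norm, sub_zero, hξdef, norm_smul, norm_inv, norm_norm]
        exact inv_mul_cancel₀ hnx.ne'
      have hξN : ξ ∉ N := fun h => hxBad ⟨hx0, h⟩
      have hξT : ξ ∉ T := fun h => hξN ⟨h, hξS⟩
      have htends : Tendsto (fun k => radFun (Ω k) ξ) atTop (𝓝 0) := not_not.mp hξT
      have hev : ∀ᶠ k in atTop, radFun (Ω k) ξ < ‖x‖ := htends.eventually_lt_const hnx
      refine Tendsto.congr' ?_ tendsto_const_nhds
      filter_upwards [hev] with k hk
      refine (Set.indicator_of_notMem ?_ _).symm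
      intro hxΩ
      have hmem : ‖x‖ ∈ {c : ℝ | 0 < c ∧ c • ξ ∈ Ω k} := by
        refine ⟨hnx, ?_⟩
        rw [hξdef, smul_smul, mul_inv_cancel₀ hnx.ne', one_smul]
        exact hxΩ
      have hbdd : BddAbove {c : ℝ | 0 < c ∧ c • ξ ∈ Ω k} := by
        refine ⟨R, fun c hc => ?_⟩
        have := hsub k hc.2
        rw [mem_closedBall, dist_eq_norm, sub_zero, norm_smul] at this
        have hξ1 : ‖ξ‖ = 1 := by simpa using hξS
        rw [hξ1, mul_one, Real.norm_eq_abs, abs_of_pos hc.1] at this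
        exact this
      have : ‖x‖ ≤ radFun (Ω k) ξ := le_csSup hbdd hmem
      exact absurd (lt_of_le_of_lt this hk) (lt_irrefl _)
    have hdom := tendsto_lintegral_of_dominated_convergence (μ := (volume : Measure (Eucl n)))
      (F := fun k => (Ω k).indicator (1 : Eucl n → ℝ≥0∞))
      (bound := (closedBall (0 : Eucl n) R).indicator (1 : Eucl n → ℝ≥0∞))
      (fun k => measurable_const.indicator (hcomp k).isClosed.measurableSet)
      (fun k => Eventually.of_forall
        (Set.indicator_le_indicator_of_subset (hsub k) (fun _ => zero_le)))
      (by rw [lintegral_indicator_one measurableSet_closedBall]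
          exact measure_closedBall_lt_top.ne)
      (by
        have hnull : volume (Bad ∪ {0}) = 0 := measure_union_null hBad (measure_singleton 0)
        have hae : ∀ᵐ x : Eucl n, x ∉ Bad ∪ ({0} : Set (Eucl n)) := by
          rw [ae_iff]
          refine measure_mono_null (fun a ha => ?_) hnull
          simp only [mem_setOf_eq, not_not] at ha
          exact ha
        exact hae.mono hpt)
    have heq1 : (fun k => ∫⁻ x, (Ω k).indicator (1 : Eucl n → ℝ≥0∞) x) =
        fun k => volume (Ω k) :=
      funext fun k => lintegral_indicator_one (hcomp k).isClosed.measurableSet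
    rw [heq1] at hdom
    simpa using hdom
  have hvolR : Tendsto (fun k => (volume (Ω k)).toReal) atTop (𝓝 0) := by
    have h := (ENNReal.tendsto_toReal (by simp : (0:ℝ≥0∞) ≠ ∞)).comp hvol
    simpa [Function.comp_def] using h
  have hC := hvolR.const_mul C₀
  rw [mul_zero] at hC
  exact squeeze_zero_norm hbound hC

end
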